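/- arXiv:hep-lat/0206003 — 5 statements merged into one kernel-verified Lean document; each statement's English description precedes it below -/
import Mathlib

section
/- Let d ≥ 1 and L ≥ 1 be integers and let c be a real-valued periodic field on the lattice Γ = (ℤ/Lℤ)^d satisfying ∑_{x∈Γ} c(x) = 0. Then there exist real-valued periodic fields b_1,…,b_d on Γ such that ∑_{μ=1}^{d} (b_μ(x) − b_μ(x − ê_μ)) = c(x) for every x ∈ Γ, and |b_μ(x)| ≤ 2L · max_{y∈Γ} |c(y)| for every x ∈ Γ and every μ. -/
/-- The unit vector `ê_μ` in direction `μ` on the periodic lattice `(ℤ/Lℤ)^d`. -/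
def unitVec (d L : ℕ) (μ : Fin d) : Fin d → ZMod L := fun ν => if ν = μ then 1 else 0


/-- Iterated partial average of `c`: average over the first `k` coordinates. -/
noncomputable def cf (d L : ℕ) [NeZero L] (c : (Fin d → ZMod L) → ℝ) (k : ℕ) (x : Fin d → ZMod L) : ℝ :=
  ((L : ℝ) ^ k)⁻¹ *
    ∑ t : Fin d → ZMod L, if ∀ j : Fin d, k ≤ j.val → t j = x j then c t else 0

lemma cf_zero (d L : ℕ) [NeZero L] (c : (Fin d → ZMod L) → ℝ) (x : Fin d → ZMod L) :
    cf d L c 0 x = c x := by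
  unfold cf
  rw [pow_zero, inv_one, one_mul]
  rw [Finset.sum_congr rfl (fun t _ => if_congr
    ⟨fun h => funext fun j => h j (Nat.zero_le _), fun h j _ => congrFun h j⟩ rfl rfl)]
  simp

lemma cf_top (d L : ℕ) [NeZero L] (c : (Fin d → ZMod L) → ℝ)
    (hc : ∑ x : Fin d → ZMod L, c x = 0) (x : Fin d → ZMod L) :
    cf d L c d x = 0 := by
  unfold cf
  rw [Finset.sum_congr rfl (fun t _ => if_pos (fun j hj => absurd j.isLt (by omega))), hc,
    mul_zero]

lemma cf_indep (d L : ℕ) [NeZero L] (c : (Fin d → ZMod L) → ℝ) (m : ℕ) (x : Fin d → ZMod L)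
    (j : Fin d) (hj : j.val < m) (s : ZMod L) :
    cf d L c m (Function.update x j s) = cf d L c m x := by
  unfold cf
  congr 1
  refine Finset.sum_congr rfl fun t _ => if_congr ?_ rfl rfl
  constructor <;> intro h i hi
  · have hne : i ≠ j := fun h' => by subst h'; omega
    have := h i hi
    rwa [Function.update_of_ne hne] at this
  · have hne : i ≠ j := fun h' => by subst h'; omega
    rw [Function.update_of_ne hne]
    exact h i hi

lemma cf_slice (d L : ℕ) [NeZero L] (c : (Fin d → ZMod L) → ℝ) (k : ℕ) (hk : k < d)
    (x : Fin d → ZMod L) :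
    ∑ s : ZMod L, cf d L c k (Function.update x ⟨k, hk⟩ s) = L * cf d L c (k + 1) x := by
  have key : ∀ t : Fin d → ZMod L,
      (∑ s : ZMod L, if ∀ j : Fin d, k ≤ j.val → t j = Function.update x ⟨k, hk⟩ s j
        then c t else 0)
      = if ∀ j : Fin d, k + 1 ≤ j.val → t j = x j then c t else 0 := by
    intro t
    by_cases hQ : ∀ j : Fin d, k + 1 ≤ j.val → t j = x j
    · rw [if_pos hQ, Finset.sum_eq_single (t ⟨k, hk⟩)]
      · rw [if_pos]
        intro j hj
        rcases eq_or_ne j ⟨k, hk⟩ with rfl | hne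
        · simp
        · rw [Function.update_of_ne hne]
          have : j.val ≠ k := fun h => hne (Fin.ext h)
          exact hQ j (by omega)
      · intro s _ hs
        rw [if_neg]
        intro hP
        exact hs ((hP ⟨k, hk⟩ le_rfl).trans (Function.update_self _ _ _)).symm
      · simp
    · rw [if_neg hQ]
      refine Finset.sum_eq_zero fun s _ => ?_
      rw [if_neg]
      intro hP
      apply hQ
      intro j hj
      have hne : j ≠ ⟨k, hk⟩ := fun h' => by subst h'; simp at hj
      have := hP j (by omega)
      rwa [Function.update_of_ne hne] at this
  unfold cf
  rw [← Finset.mul_sum, Finset.sum_comm]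
  rw [Finset.sum_congr rfl fun t _ => key t]
  have hL0 : (L : ℝ) ≠ 0 := Nat.cast_ne_zero.mpr (NeZero.ne L)
  rw [pow_succ]
  field_simp


lemma sum_range_zmod (L : ℕ) [NeZero L] (f : ZMod L → ℝ) :
    ∑ i ∈ Finset.range L, f (i : ZMod L) = ∑ s : ZMod L, f s :=
  Finset.sum_nbij' (fun i => ((i : ZMod L))) (fun s => s.val)
    (fun a _ => Finset.mem_univ _) (fun s _ => Finset.mem_range.mpr s.val_lt)
    (fun a ha => ZMod.val_cast_of_lt (Finset.mem_range.mp ha))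
    (fun s _ => ZMod.natCast_rightInverse s) (fun a _ => rfl)

lemma cf_bound (d L : ℕ) [NeZero L] (c : (Fin d → ZMod L) → ℝ) (M : ℝ)
    (hM : ∀ y, |c y| ≤ M) : ∀ k, k ≤ d → ∀ x, |cf d L c k x| ≤ M := by
  intro k
  induction k with
  | zero => intro _ x; rw [cf_zero]; exact hM x
  | succ k ih =>
    intro hk x
    have hk' : k < d := hk
    have hL0 : (0 : ℝ) < (L : ℝ) := by
      exact_mod_cast Nat.pos_of_ne_zero (NeZero.ne L)
    have heq : cf d L c (k + 1) x
        = (L : ℝ)⁻¹ * ∑ s : ZMod L, cf d L c k (Function.update x ⟨k, hk'⟩ s) := by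
      rw [cf_slice d L c k hk' x]
      field_simp
    rw [heq, abs_mul, abs_inv, abs_of_pos hL0]
    calc (L : ℝ)⁻¹ * |∑ s : ZMod L, cf d L c k (Function.update x ⟨k, hk'⟩ s)|
        ≤ (L : ℝ)⁻¹ * ∑ s : ZMod L, |cf d L c k (Function.update x ⟨k, hk'⟩ s)| := by
          apply mul_le_mul_of_nonneg_left (Finset.abs_sum_le_sum_abs _ _)
          positivity
      _ ≤ (L : ℝ)⁻¹ * ∑ _s : ZMod L, M := by
          apply mul_le_mul_of_nonneg_left
            (Finset.sum_le_sum fun s _ => ih (le_of_lt hk') _)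
          positivity
      _ = M := by
          rw [Finset.sum_const, Finset.card_univ, ZMod.card, nsmul_eq_mul]
          field_simp

lemma gsum (d L : ℕ) [NeZero L] (c : (Fin d → ZMod L) → ℝ) (k : ℕ) (hk : k < d)
    (x : Fin d → ZMod L) :
    ∑ s : ZMod L, (cf d L c k (Function.update x ⟨k, hk⟩ s)
      - cf d L c (k + 1) (Function.update x ⟨k, hk⟩ s)) = 0 := by
  rw [Finset.sum_sub_distrib, cf_slice d L c k hk x,
    Finset.sum_congr rfl (fun s _ => cf_indep d L c (k + 1) x ⟨k, hk⟩ (Nat.lt_succ_self k) s),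
    Finset.sum_const, Finset.card_univ, ZMod.card, nsmul_eq_mul, sub_self]

/-- **Lemma 3.1**: for a periodic field `c` on `Γ = (ℤ/Lℤ)^d` with vanishing total sum,
there exist periodic fields `b_μ` whose backward divergence equals `c` and which obey the
bound `|b_μ(x)| ≤ 2 L max_y |c(y)|`. -/
theorem lemma_divergence_representation
    (d L : ℕ) (hd : 1 ≤ d) (hL : 1 ≤ L) [NeZero L]
    (c : (Fin d → ZMod L) → ℝ)
    (hc : ∑ x : Fin d → ZMod L, c x = 0) :
    ∃ b : Fin d → (Fin d → ZMod L) → ℝ,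
      (∀ x : Fin d → ZMod L,
        ∑ μ : Fin d, (b μ x - b μ (x - unitVec d L μ)) = c x) ∧
      (∀ (μ : Fin d) (x : Fin d → ZMod L),
        |b μ x| ≤ 2 * L * Finset.univ.sup' Finset.univ_nonempty (fun y => |c y|)) := by
  classical
  set M := Finset.univ.sup' Finset.univ_nonempty (fun y => |c y|) with hMdef
  have hM : ∀ y, |c y| ≤ M := fun y => Finset.le_sup' (fun y => |c y|) (Finset.mem_univ y)
  set g : ℕ → (Fin d → ZMod L) → ℝ :=
    fun k x => cf d L c k x - cf d L c (k + 1) x with hgdef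
  refine ⟨fun μ x => ∑ s ∈ Finset.range ((x μ).val + 1),
      g μ.val (Function.update x μ (s : ZMod L)), ?_, ?_⟩
  · intro x
    have hsub : ∀ μ : Fin d, x - unitVec d L μ = Function.update x μ (x μ - 1) := by
      intro μ
      funext ν
      rcases eq_or_ne ν μ with rfl | hne
      · simp [unitVec]
      · simp [unitVec, hne, Function.update_of_ne hne]
    have hcollapse : ∀ (μ : Fin d) (a : ZMod L),
        (∑ s ∈ Finset.range (((Function.update x μ a) μ).val + 1),
          g μ.val (Function.update (Function.update x μ a) μ (s : ZMod L)))
        = ∑ s ∈ Finset.range (a.val + 1), g μ.val (Function.update x μ (s : ZMod L)) := by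
      intro μ a
      simp [Function.update_idem]
    have hgzero : ∀ μ : Fin d, ∑ s : ZMod L, g μ.val (Function.update x μ s) = 0 := by
      intro μ
      have := gsum d L c μ.val μ.isLt x
      simpa [hgdef] using this
    have key : ∀ μ : Fin d,
        (∑ s ∈ Finset.range ((x μ).val + 1), g μ.val (Function.update x μ (s : ZMod L)))
        - (∑ s ∈ Finset.range (((x - unitVec d L μ) μ).val + 1),
            g μ.val (Function.update (x - unitVec d L μ) μ (s : ZMod L)))
        = g μ.val x := by
      intro μ
      rw [hsub μ]
      rw [hcollapse μ (x μ - 1)]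
      rcases Nat.eq_zero_or_pos ((x μ).val) with h0 | hpos
      · have hx0 : x μ = 0 := (ZMod.val_eq_zero _).mp h0
        have hval : (x μ - 1).val + 1 = L := by
          obtain ⟨n, rfl⟩ := Nat.exists_eq_succ_of_ne_zero (NeZero.ne L)
          rw [hx0, zero_sub, ZMod.val_neg_one]
        rw [hval, h0, sum_range_zmod L (fun s => g μ.val (Function.update x μ s)),
          hgzero μ, sub_zero]
        simp [← hx0, Function.update_eq_self]
      · obtain ⟨t, ht⟩ : ∃ t, (x μ).val = t + 1 :=
          ⟨(x μ).val - 1, by omega⟩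
        have hxcast : x μ = ((t + 1 : ℕ) : ZMod L) := by
          rw [← ht]; exact (ZMod.natCast_rightInverse (x μ)).symm
        have hsub1 : x μ - 1 = ((t : ℕ) : ZMod L) := by
          rw [hxcast]; push_cast; ring
        have hvt : (x μ - 1).val = t := by
          rw [hsub1, ZMod.val_cast_of_lt]
          have := ZMod.val_lt (x μ); omega
        rw [hvt, ht, Finset.sum_range_succ]
        simp only [add_sub_cancel_left]
        rw [← hxcast]
        simp [Function.update_eq_self]
    rw [Finset.sum_congr rfl fun μ _ => key μ]
    have : ∑ μ : Fin d, g μ.val x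
        = ∑ i ∈ Finset.range d, (cf d L c i x - cf d L c (i + 1) x) :=
      Fin.sum_univ_eq_sum_range (fun i => cf d L c i x - cf d L c (i + 1) x) d
    rw [this, Finset.sum_range_sub' (fun i => cf d L c i x) d, cf_zero,
      cf_top d L c hc, sub_zero]
  · intro μ x
    have hM0 : 0 ≤ M := le_trans (abs_nonneg _) (hM x)
    have hgb : ∀ y : Fin d → ZMod L, |g μ.val y| ≤ 2 * M := by
      intro y
      calc |g μ.val y| ≤ |cf d L c μ.val y| + |cf d L c (μ.val + 1) y| := abs_sub _ _
        _ ≤ M + M := add_le_add (cf_bound d L c M hM μ.val (le_of_lt μ.isLt) y)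
            (cf_bound d L c M hM (μ.val + 1) μ.isLt y)
        _ = 2 * M := by ring
    calc |∑ s ∈ Finset.range ((x μ).val + 1), g μ.val (Function.update x μ (s : ZMod L))|
        ≤ ∑ s ∈ Finset.range ((x μ).val + 1), |g μ.val (Function.update x μ (s : ZMod L))| :=
          Finset.abs_sum_le_sum_abs _ _
      _ ≤ ∑ _s ∈ Finset.range ((x μ).val + 1), 2 * M :=
          Finset.sum_le_sum fun s _ => hgb _
      _ = ((x μ).val + 1 : ℕ) * (2 * M) := by
          rw [Finset.sum_const, Finset.card_range, nsmul_eq_mul]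
      _ ≤ (L : ℝ) * (2 * M) := by
          have h1 : (((x μ).val + 1 : ℕ) : ℝ) ≤ (L : ℝ) := by
            exact_mod_cast Nat.succ_le_of_lt (ZMod.val_lt (x μ))
          have h2 : (0:ℝ) ≤ 2 * M := by positivity
          exact mul_le_mul_of_nonneg_right h1 h2
      _ = 2 * L * M := by ring
end

section
/- Let d ≥ 1 and L ≥ 1 be integers and let c be a real-valued periodic field on Γ = (ℤ/Lℤ)^d with ∑_{x∈Γ} c(x) = 0. Identify each x ∈ Γ with its representative coordinates (x_1,…,x_d), each in {0,…,L−1}, and define for μ ∈ {1,…,d}: b_μ(x) = L^{−(d−μ)} ∑_{y_μ=0}^{x_μ} ∑_{y_{μ+1}=0}^{L−1} ⋯ ∑_{y_d=0}^{L−1} c(x_1,…,x_{μ−1},y_μ,…,y_d) − ((x_μ+1)/L^{d−μ+1}) ∑_{y_μ=0}^{L−1} ⋯ ∑_{y_d=0}^{L−1} c(x_1,…,x_{μ−1},y_μ,…,y_d). Then the fields b_μ, regarded as periodic fields on Γ, satisfy ∑_{μ=1}^{d} (b_μ(x) − b_μ(x − ê_μ)) = c(x) for every x ∈ Γ. -/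
/-- The explicit current of eq. (3.9): identifying a lattice point `x ∈ (ℤ/Lℤ)^d` with
its representative coordinates `(x ν).val ∈ {0,…,L−1}`,
`b_μ(x) = L^{-(d-μ)} ∑_{y_μ=0}^{x_μ} ∑_{y_{μ+1},…,y_d=0}^{L-1} c(x_1,…,x_{μ-1},y_μ,…,y_d)
 − ((x_μ+1)/L^{d-μ+1}) ∑_{y_μ,…,y_d=0}^{L-1} c(x_1,…,x_{μ-1},y_μ,…,y_d)`
(with `μ` zero-indexed here, so the exponents read `d-1-μ` and `d-μ`).
The sums over the trailing coordinates are realized by summing `c y` over all periodic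
lattice points `y` that agree with `x` in the coordinates before `μ`, with the
`μ`-th coordinate restricted by `(y μ).val ≤ (x μ).val` in the first sum. -/
noncomputable def bField (d L : ℕ) [NeZero L] (c : (Fin d → ZMod L) → ℝ)
    (μ : Fin d) (x : Fin d → ZMod L) : ℝ :=
  (∑ y ∈ Finset.univ.filter
      (fun y : Fin d → ZMod L =>
        (∀ ν, ν < μ → y ν = x ν) ∧ (y μ).val ≤ (x μ).val), c y)
    / (L : ℝ) ^ (d - 1 - μ.val)
  - ((x μ).val + 1 : ℝ) *
    (∑ y ∈ Finset.univ.filter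
      (fun y : Fin d → ZMod L => ∀ ν, ν < μ → y ν = x ν), c y)
    / (L : ℝ) ^ (d - μ.val)

/-- Auxiliary telescoping function. -/
noncomputable def gAux (d L : ℕ) [NeZero L] (c : (Fin d → ZMod L) → ℝ)
    (x : Fin d → ZMod L) (k : ℕ) : ℝ :=
  (∑ y ∈ Finset.univ.filter
      (fun y : Fin d → ZMod L => ∀ ν : Fin d, ν.val < k → y ν = x ν), c y)
    / (L : ℝ) ^ (d - k)

lemma bField_key (d L : ℕ) [NeZero L] (c : (Fin d → ZMod L) → ℝ)
    (μ : Fin d) (x : Fin d → ZMod L) :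
    bField d L c μ x - bField d L c μ (x - unitVec d L μ)
      = gAux d L c x (μ.val + 1) - gAux d L c x μ.val := by
  classical
  have hLpos : 0 < L := Nat.pos_of_ne_zero (NeZero.ne L)
  set x' := x - unitVec d L μ with hx'
  have hx'ne : ∀ ν, ν ≠ μ → x' ν = x ν := by
    intro ν h
    simp [hx', unitVec, h]
  have hx'μ : x' μ = x μ - 1 := by
    simp [hx', unitVec]
  -- The "T" filter is the same for x and x'
  have hTfilter :
      (Finset.univ.filter (fun y : Fin d → ZMod L => ∀ ν, ν < μ → y ν = x' ν))
        = Finset.univ.filter (fun y : Fin d → ZMod L => ∀ ν, ν < μ → y ν = x ν) := by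
    refine Finset.filter_congr fun y _ => ?_
    constructor
    · intro h ν hν; rw [h ν hν, hx'ne ν (ne_of_lt hν)]
    · intro h ν hν; rw [h ν hν, hx'ne ν (ne_of_lt hν)]
  set T : ℝ :=
    ∑ y ∈ Finset.univ.filter (fun y : Fin d → ZMod L => ∀ ν, ν < μ → y ν = x ν), c y with hT
  set U : ℝ :=
    ∑ y ∈ Finset.univ.filter
      (fun y : Fin d → ZMod L => (∀ ν, ν < μ → y ν = x ν) ∧ y μ = x μ), c y with hU
  -- identify gAux values
  have hg1 : gAux d L c x (μ.val + 1) = U / (L : ℝ) ^ (d - 1 - μ.val) := by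
    rw [gAux, hU]
    have hfil :
        (Finset.univ.filter
          (fun y : Fin d → ZMod L => ∀ ν : Fin d, ν.val < μ.val + 1 → y ν = x ν))
          = Finset.univ.filter
            (fun y : Fin d → ZMod L => (∀ ν, ν < μ → y ν = x ν) ∧ y μ = x μ) := by
      refine Finset.filter_congr fun y _ => ?_
      constructor
      · intro h
        exact ⟨fun ν hν => h ν (Nat.lt_succ_of_lt (Fin.lt_def.mp hν)),
          h μ (Nat.lt_succ_self _)⟩
      · rintro ⟨h1, h2⟩ ν hν
        rcases lt_or_eq_of_le (Nat.lt_succ_iff.mp hν) with h | h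
        · exact h1 ν (Fin.lt_def.mpr h)
        · have : ν = μ := Fin.ext h
          rw [this]; exact h2
    rw [hfil]
    have hexp : d - (μ.val + 1) = d - 1 - μ.val := by omega
    rw [hexp]
  have hg0 : gAux d L c x μ.val = T / (L : ℝ) ^ (d - μ.val) := by
    rw [gAux, hT]
    congr 2
  -- value of (x' μ).val and the S-sum identities, by cases
  have hLne : (L : ℝ) ≠ 0 := Nat.cast_ne_zero.mpr (NeZero.ne L)
  have hpow1 : (L : ℝ) ^ (d - μ.val) = (L : ℝ) ^ (d - 1 - μ.val) * L := by
    rw [← pow_succ]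
    congr 1
    have := μ.isLt
    omega
  have hpowne : (L : ℝ) ^ (d - 1 - μ.val) ≠ 0 := pow_ne_zero _ hLne
  by_cases h0 : (x μ).val = 0
  · -- case x_μ = 0
    have hxμ0 : x μ = 0 := by
      have := ZMod.val_injective L (a₁ := x μ) (a₂ := 0)
      apply this
      simpa using h0
    have hx'val : (x' μ).val = L - 1 := by
      rw [hx'μ, hxμ0, zero_sub]
      obtain ⟨k, rfl⟩ : ∃ k, L = k + 1 := ⟨L - 1, by omega⟩
      exact ZMod.val_neg_one k
    have hS : (Finset.univ.filter
        (fun y : Fin d → ZMod L =>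
          (∀ ν, ν < μ → y ν = x ν) ∧ (y μ).val ≤ (x μ).val)) =
        Finset.univ.filter
          (fun y : Fin d → ZMod L => (∀ ν, ν < μ → y ν = x ν) ∧ y μ = x μ) := by
      refine Finset.filter_congr fun y _ => ?_
      constructor
      · rintro ⟨h1, h2⟩
        refine ⟨h1, ?_⟩
        apply ZMod.val_injective
        rw [h0] at h2
        omega
      · rintro ⟨h1, h2⟩
        exact ⟨h1, by rw [h2]⟩
    have hS' : (Finset.univ.filter
        (fun y : Fin d → ZMod L =>
          (∀ ν, ν < μ → y ν = x' ν) ∧ (y μ).val ≤ (x' μ).val)) =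
        Finset.univ.filter (fun y : Fin d → ZMod L => ∀ ν, ν < μ → y ν = x ν) := by
      refine Finset.filter_congr fun y _ => ?_
      constructor
      · rintro ⟨h1, _⟩ ν hν
        rw [h1 ν hν, hx'ne ν (ne_of_lt hν)]
      · intro h1
        refine ⟨fun ν hν => by rw [h1 ν hν, hx'ne ν (ne_of_lt hν)], ?_⟩
        rw [hx'val]
        have := ZMod.val_lt (y μ)
        omega
    rw [bField, bField, hTfilter, hS, hS', ← hT, ← hU, hg1, hg0, h0, hx'val]
    have hcast : ((L - 1 : ℕ) : ℝ) = (L : ℝ) - 1 := by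
      push_cast [Nat.cast_sub hLpos]
      ring
    rw [hcast, hpow1]
    field_simp
    ring
  · -- case x_μ ≠ 0
    have hL2 : 2 ≤ L := by
      by_contra h
      have : L = 1 := by omega
      subst this
      have := ZMod.val_lt (x μ)
      omega
    have h1val : (1 : ZMod L).val = 1 := by
      rw [ZMod.val_one_eq_one_mod]
      exact Nat.mod_eq_of_lt hL2
    have hx'val : (x' μ).val = (x μ).val - 1 := by
      rw [hx'μ, ZMod.val_sub (by omega : (1 : ZMod L).val ≤ (x μ).val), h1val]
    have hS : (∑ y ∈ Finset.univ.filter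
        (fun y : Fin d → ZMod L =>
          (∀ ν, ν < μ → y ν = x ν) ∧ (y μ).val ≤ (x μ).val), c y) =
        (∑ y ∈ Finset.univ.filter
          (fun y : Fin d → ZMod L =>
            (∀ ν, ν < μ → y ν = x ν) ∧ (y μ).val ≤ (x μ).val - 1), c y) + U := by
      have hdisj : Disjoint
          (Finset.univ.filter (fun y : Fin d → ZMod L =>
            (∀ ν, ν < μ → y ν = x ν) ∧ (y μ).val ≤ (x μ).val - 1))
          (Finset.univ.filter (fun y : Fin d → ZMod L =>
            (∀ ν, ν < μ → y ν = x ν) ∧ y μ = x μ)) := by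
        rw [Finset.disjoint_left]
        rintro y hy hy'
        simp only [Finset.mem_filter, Finset.mem_univ, true_and] at hy hy'
        have hv : (y μ).val = (x μ).val := by rw [hy'.2]
        have := hy.2
        omega
      have hun : (Finset.univ.filter
          (fun y : Fin d → ZMod L =>
            (∀ ν, ν < μ → y ν = x ν) ∧ (y μ).val ≤ (x μ).val)) =
          (Finset.univ.filter (fun y : Fin d → ZMod L =>
            (∀ ν, ν < μ → y ν = x ν) ∧ (y μ).val ≤ (x μ).val - 1)) ∪
          (Finset.univ.filter (fun y : Fin d → ZMod L =>
            (∀ ν, ν < μ → y ν = x ν) ∧ y μ = x μ)) := by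
        ext y
        simp only [Finset.mem_union, Finset.mem_filter, Finset.mem_univ, true_and]
        constructor
        · rintro ⟨hA, hle⟩
          by_cases hB : y μ = x μ
          · exact Or.inr ⟨hA, hB⟩
          · have hv : (y μ).val ≠ (x μ).val := fun h => hB (ZMod.val_injective L h)
            exact Or.inl ⟨hA, by omega⟩
        · rintro (⟨hA, hle⟩ | ⟨hA, hB⟩)
          · exact ⟨hA, by omega⟩
          · exact ⟨hA, by rw [hB]⟩
      rw [hU, hun, Finset.sum_union hdisj]
    have hS' : (Finset.univ.filter
        (fun y : Fin d → ZMod L =>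
          (∀ ν, ν < μ → y ν = x' ν) ∧ (y μ).val ≤ (x' μ).val)) =
        Finset.univ.filter
          (fun y : Fin d → ZMod L =>
            (∀ ν, ν < μ → y ν = x ν) ∧ (y μ).val ≤ (x μ).val - 1) := by
      refine Finset.filter_congr fun y _ => ?_
      rw [hx'val]
      constructor
      · rintro ⟨h1, h2⟩
        exact ⟨fun ν hν => by rw [h1 ν hν, hx'ne ν (ne_of_lt hν)], h2⟩
      · rintro ⟨h1, h2⟩
        exact ⟨fun ν hν => by rw [h1 ν hν, hx'ne ν (ne_of_lt hν)], h2⟩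
    rw [bField, bField, hTfilter, hS, hS', ← hT, hg1, hg0, hx'val]
    have hcast : (((x μ).val - 1 : ℕ) : ℝ) = ((x μ).val : ℝ) - 1 := by
      have : 1 ≤ (x μ).val := by omega
      push_cast [Nat.cast_sub this]
      ring
    rw [hcast, hpow1]
    field_simp
    ring

/-- For a periodic field `c` on `Γ = (ℤ/Lℤ)^d` with vanishing total sum, the explicit
currents `b_μ` of eq. (3.9) satisfy `∑_μ (b_μ(x) − b_μ(x − ê_μ)) = c(x)`. -/
theorem backward_divergence_of_bField
    (d L : ℕ) (hd : 1 ≤ d) (hL : 1 ≤ L) [NeZero L]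
    (c : (Fin d → ZMod L) → ℝ)
    (hc : ∑ x : Fin d → ZMod L, c x = 0) :
    ∀ x : Fin d → ZMod L,
      ∑ μ : Fin d, (bField d L c μ x - bField d L c μ (x - unitVec d L μ)) = c x := by
  classical
  intro x
  have hstep : ∀ μ : Fin d,
      bField d L c μ x - bField d L c μ (x - unitVec d L μ)
        = gAux d L c x (μ.val + 1) - gAux d L c x μ.val :=
    fun μ => bField_key d L c μ x
  calc ∑ μ : Fin d, (bField d L c μ x - bField d L c μ (x - unitVec d L μ))
      = ∑ μ : Fin d, (gAux d L c x (μ.val + 1) - gAux d L c x μ.val) :=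
        Finset.sum_congr rfl fun μ _ => hstep μ
    _ = ∑ i ∈ Finset.range d, (gAux d L c x (i + 1) - gAux d L c x i) := by
        exact Fin.sum_univ_eq_sum_range (fun i => gAux d L c x (i + 1) - gAux d L c x i) d
    _ = gAux d L c x d - gAux d L c x 0 := Finset.sum_range_sub _ _
    _ = c x := by
        have hgd : gAux d L c x d = c x := by
          rw [gAux]
          have hfil : (Finset.univ.filter
              (fun y : Fin d → ZMod L => ∀ ν : Fin d, ν.val < d → y ν = x ν)) = {x} := by
            ext y
            simp only [Finset.mem_filter, Finset.mem_univ, true_and, Finset.mem_singleton]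
            constructor
            · intro h; funext ν; exact h ν ν.isLt
            · intro h ν _; rw [h]
          rw [hfil]
          simp
        have hg0 : gAux d L c x 0 = 0 := by
          rw [gAux]
          have hfil : (Finset.univ.filter
              (fun y : Fin d → ZMod L => ∀ ν : Fin d, ν.val < 0 → y ν = x ν))
              = Finset.univ := by
            refine Finset.filter_true_of_mem fun y _ => ?_
            intro ν hν; omega
          rw [hfil, hc, zero_div]
        rw [hgd, hg0, sub_zero]
end

section
/- Let V be a finite-dimensional complex inner product space and let γ, Ĥ : V → V be self-adjoint linear maps with γ² = 1 and Ĥ² = 1. Then Tr γ + Tr Ĥ = 2 · (dim(ker(γ − 1) ∩ ker(Ĥ − 1)) − dim(ker(γ + 1) ∩ ker(Ĥ + 1))), where the right-hand side dimensions are over ℂ and the equality is between complex numbers (the traces being real integers). -/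
/-!
`(γ + 1) / 2` is the projection onto `ker (γ - 1)`, so `Tr γ = 2 dim ker (γ - 1) - dim V`; when `γ`
is self-adjoint, `ker (γ + 1)` is the orthogonal complement of `ker (γ - 1)`. With `A = ker (γ - 1)`
and `B = ker (Ĥ - 1)`, the claim becomes `dim (A ⊓ B) - dim (Aᗮ ⊓ Bᗮ) = dim A + dim B - dim V`,
which follows from `Aᗮ ⊓ Bᗮ = (A ⊔ B)ᗮ` and Grassmann's formula.
-/

open Module

namespace LinearMap

section Field

variable {K V : Type*} [Field K] [NeZero (2 : K)] [AddCommGroup V] [Module K V]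

theorem isProj_ker_sub_one_of_comp_self_eq_one {γ : V →ₗ[K] V} (hγ : γ ∘ₗ γ = 1) :
    IsProj (ker (γ - 1)) ((2 : K)⁻¹ • (γ + 1)) where
  map_mem x := by
    have hγx : γ (γ x) = x := LinearMap.congr_fun hγ x
    simp only [mem_ker, sub_apply, smul_apply, add_apply, Module.End.one_apply, map_smul, map_add,
      hγx]
    module
  map_id x hx := by
    rw [mem_ker, sub_apply, Module.End.one_apply, sub_eq_zero] at hx
    rw [smul_apply, add_apply, Module.End.one_apply, hx, ← two_smul K x, smul_smul,
      inv_mul_cancel₀ two_ne_zero, one_smul]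

theorem range_add_one_eq_ker_sub_one {γ : V →ₗ[K] V} (hγ : γ ∘ₗ γ = 1) :
    range (γ + 1) = ker (γ - 1) := by
  rw [← (isProj_ker_sub_one_of_comp_self_eq_one hγ).range,
    range_smul _ _ (inv_ne_zero two_ne_zero)]

theorem trace_eq_two_mul_finrank_ker_sub_one_sub_finrank [FiniteDimensional K V]
    {γ : V →ₗ[K] V} (hγ : γ ∘ₗ γ = 1) :
    trace K V γ = 2 * finrank K (ker (γ - 1)) - finrank K V := by
  have hproj := (isProj_ker_sub_one_of_comp_self_eq_one hγ).trace
  rw [map_smul, map_add, trace_one, smul_eq_mul] at hproj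
  rw [← hproj, ← mul_assoc, mul_inv_cancel₀ two_ne_zero, one_mul, add_sub_cancel_right]

end Field

variable {𝕜 E : Type*} [RCLike 𝕜] [NormedAddCommGroup E] [InnerProductSpace 𝕜 E]

theorem IsSymmetric.ker_add_one_eq_orthogonal_ker_sub_one {γ : E →ₗ[𝕜] E}
    (hsym : γ.IsSymmetric) (hγ : γ ∘ₗ γ = 1) :
    ker (γ + 1) = (ker (γ - 1))ᗮ := by
  rw [← range_add_one_eq_ker_sub_one hγ, (hsym.add IsSymmetric.one).orthogonal_range]

end LinearMap

theorem Submodule.finrank_inf_add_finrank_eq_add_finrank_inf_orthogonal {𝕜 E : Type*} [RCLike 𝕜]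
    [NormedAddCommGroup E] [InnerProductSpace 𝕜 E] [FiniteDimensional 𝕜 E]
    (A B : Submodule 𝕜 E) :
    finrank 𝕜 (A ⊓ B : Submodule 𝕜 E) + finrank 𝕜 E =
      finrank 𝕜 A + finrank 𝕜 B + finrank 𝕜 (Aᗮ ⊓ Bᗮ : Submodule 𝕜 E) := by
  rw [Submodule.inf_orthogonal, ← (A ⊔ B).finrank_add_finrank_orthogonal,
    ← Submodule.finrank_sup_add_finrank_inf_eq A B]
  ring

/-- For two self-adjoint involutions `γ` and `Ĥ` on a finite-dimensional complex
inner product space,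
`Tr γ + Tr Ĥ = 2 (dim(ker(γ−1) ∩ ker(Ĥ−1)) − dim(ker(γ+1) ∩ ker(Ĥ+1)))`. -/
theorem trace_sum_of_selfadjoint_involutions
    {V : Type*} [NormedAddCommGroup V] [InnerProductSpace ℂ V] [FiniteDimensional ℂ V]
    (γ H : V →ₗ[ℂ] V)
    (hγsa : LinearMap.adjoint γ = γ) (hHsa : LinearMap.adjoint H = H)
    (hγ : γ ∘ₗ γ = 1) (hH : H ∘ₗ H = 1) :
    LinearMap.trace ℂ V γ + LinearMap.trace ℂ V H =
      2 * ((Module.finrank ℂ ↥(LinearMap.ker (γ - 1) ⊓ LinearMap.ker (H - 1)) : ℂ)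
        - (Module.finrank ℂ ↥(LinearMap.ker (γ + 1) ⊓ LinearMap.ker (H + 1)) : ℂ)) := by
  have hγsym : γ.IsSymmetric := (LinearMap.isSymmetric_iff_isSelfAdjoint γ).mpr hγsa
  have hHsym : H.IsSymmetric := (LinearMap.isSymmetric_iff_isSelfAdjoint H).mpr hHsa
  rw [hγsym.ker_add_one_eq_orthogonal_ker_sub_one hγ,
    hHsym.ker_add_one_eq_orthogonal_ker_sub_one hH,
    LinearMap.trace_eq_two_mul_finrank_ker_sub_one_sub_finrank hγ,
    LinearMap.trace_eq_two_mul_finrank_ker_sub_one_sub_finrank hH]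
  have hdim := congrArg (Nat.cast : ℕ → ℂ)
    (Submodule.finrank_inf_add_finrank_eq_add_finrank_inf_orthogonal (LinearMap.ker (γ - 1))
      (LinearMap.ker (H - 1)))
  push_cast at hdim
  linear_combination -2 * hdim
end

section
/- Let V be a finite-dimensional complex inner product space, let γ : V → V be a self-adjoint linear map with γ² = 1, and let D : V → V be a linear map satisfying the Ginsparg–Wilson relation γ∘D + D∘γ = D∘γ∘D and the γ-hermiticity condition D† = γ∘D∘γ (where D† is the adjoint of D). Define n₊ = dim(ker D ∩ ker(γ − 1)) and n₋ = dim(ker D ∩ ker(γ + 1)). Then the lattice index theorem holds: Tr(γ ∘ (1 − D/2)) = n₊ − n₋. -/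
/-!
With `B = γ D`, γ-hermiticity makes `B` self-adjoint, and the Ginsparg–Wilson relation says
exactly that `A = γ (1 - D/2)` anticommutes with `B`. Self-adjointness splits
`V = ker B ⊕ range B` into two `A`-invariant pieces. On `range B` the operator `B` is invertible
and conjugates `A` to `-A`, so that piece contributes no trace; on `ker B = ker D` the operator
`A` is the involution `γ`, whose trace is the difference of the dimensions of its `±1`
eigenspaces.
-/

open LinearMap Module Submodule

namespace LinearMap

section Field

variable {K V : Type*} [Field K] [AddCommGroup V] [Module K V]

theorem finrank_ker_restrict {f : Module.End K V} {p : Submodule K V}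
    (hf : ∀ x ∈ p, f x ∈ p) :
    finrank K (ker (f.restrict hf)) = finrank K ↥(p ⊓ ker f) := by
  rw [ker_restrict, ← finrank_map_subtype_eq, map_comap_subtype]

theorem mapsTo_ker_of_mul_eq_neg_mul {A B : Module.End K V} (h : A * B = -(B * A)) :
    ∀ x ∈ ker B, A x ∈ ker B := by
  intro x hx
  have hAB : A (B x) = -B (A x) := congr($h x)
  rwa [mem_ker.mp hx, map_zero, zero_eq_neg] at hAB

theorem mapsTo_range_of_mul_eq_neg_mul {A B : Module.End K V} (h : A * B = -(B * A)) :
    ∀ x ∈ range B, A x ∈ range B := by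
  rintro _ ⟨y, rfl⟩
  have hAB : A (B y) = -B (A y) := congr($h y)
  exact ⟨-A y, by rw [map_neg, hAB]⟩

theorem isCompl_ker_sub_one_ker_add_one [NeZero (2 : K)] {g : Module.End K V}
    (hg : g * g = 1) :
    IsCompl (ker (g - 1)) (ker (g + 1)) := by
  have hgg (x : V) : g (g x) = x := congr($hg x)
  constructor
  · rw [disjoint_def]
    intro x h₁ h₂
    simp only [mem_ker, sub_apply, add_apply, Module.End.one_apply] at h₁ h₂
    have : (2 : K) • x = 0 := by rw [two_smul]; nth_rw 1 [← sub_eq_zero.mp h₁]; exact h₂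
    exact (smul_eq_zero.mp this).resolve_left two_ne_zero
  · rw [codisjoint_iff_exists_add_eq]
    intro x
    refine ⟨(2⁻¹ : K) • (x + g x), (2⁻¹ : K) • (x - g x), ?_, ?_, ?_⟩
    · simp only [mem_ker, sub_apply, Module.End.one_apply, map_smul, map_add, hgg]
      module
    · simp only [mem_ker, add_apply, Module.End.one_apply, map_smul, map_sub, hgg]
      module
    · rw [← smul_add, add_add_sub_cancel, ← two_smul K, smul_smul,
        inv_mul_cancel₀ two_ne_zero, one_smul]

theorem trace_eq_zero_of_mul_eq_neg_mul [NeZero (2 : K)] {A B : Module.End K V} (hB : IsUnit B)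
    (h : A * B = -(B * A)) : trace K V A = 0 := by
  obtain ⟨u, rfl⟩ := hB
  have hconj : trace K V A = trace K V (↑u⁻¹ * (A * u)) := by
    rw [trace_mul_comm, mul_assoc, u.mul_inv, mul_one]
  rw [h, mul_neg, map_neg, ← mul_assoc, u.inv_mul, one_mul, eq_neg_iff_add_eq_zero,
    ← two_smul K] at hconj
  exact (smul_eq_zero.mp hconj).resolve_left two_ne_zero

theorem trace_eq_trace_restrict_add_trace_restrict [FiniteDimensional K V]
    {p q : Submodule K V} (hpq : IsCompl p q) {f : Module.End K V} (hp : ∀ x ∈ p, f x ∈ p)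
    (hq : ∀ x ∈ q, f x ∈ q) :
    trace K V f = trace K p (f.restrict hp) + trace K q (f.restrict hq) := by
  let N : Bool → Submodule K V := fun b => bif b then p else q
  have hN : DirectSum.IsInternal N :=
    (DirectSum.isInternal_submodule_iff_isCompl N (i := true) (j := false) (by simp)
      (by ext b; cases b <;> simp)).mpr hpq
  rw [trace_eq_sum_trace_restrict hN (f := f) (by rintro (_ | _) <;> assumption),
    Fintype.sum_bool]
  rfl

theorem trace_eq_finrank_sub_finrank_of_mul_self_eq_one [FiniteDimensional K V] [NeZero (2 : K)]
    {g : Module.End K V} (hg : g * g = 1) :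
    trace K V g = finrank K (ker (g - 1)) - finrank K (ker (g + 1)) := by
  have h₁ : ∀ x ∈ ker (g - 1), g x ∈ ker (g - 1) := by
    intro x hx
    rwa [show g x = x from sub_eq_zero.mp hx]
  have h₂ : ∀ x ∈ ker (g + 1), g x ∈ ker (g + 1) := by
    intro x hx
    rw [show g x = -x from eq_neg_of_add_eq_zero_left hx]
    exact neg_mem hx
  have hr₁ : g.restrict h₁ = 1 := by
    ext x
    exact sub_eq_zero.mp x.2
  have hr₂ : g.restrict h₂ = -1 := by
    ext x
    exact eq_neg_of_add_eq_zero_left x.2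
  rw [trace_eq_trace_restrict_add_trace_restrict (isCompl_ker_sub_one_ker_add_one hg) h₁ h₂,
    hr₁, hr₂, map_neg, trace_one, trace_one, ← sub_eq_add_neg]

theorem trace_restrict_eq_finrank_sub_finrank_of_mul_self_eq_one [FiniteDimensional K V]
    [NeZero (2 : K)] {g : Module.End K V} (hg : g * g = 1) {p : Submodule K V}
    (hp : ∀ x ∈ p, g x ∈ p) :
    trace K p (g.restrict hp) =
      finrank K ↥(p ⊓ ker (g - 1)) - finrank K ↥(p ⊓ ker (g + 1)) := by
  have hr : g.restrict hp * g.restrict hp = 1 := by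
    ext x
    exact congr($hg x)
  have h₁ : g.restrict hp - 1 = (g - 1).restrict fun x hx => sub_mem (hp x hx) hx := by
    ext; simp
  have h₂ : g.restrict hp + 1 = (g + 1).restrict fun x hx => add_mem (hp x hx) hx := by
    ext; simp
  rw [trace_eq_finrank_sub_finrank_of_mul_self_eq_one hr, h₁, h₂, finrank_ker_restrict,
    finrank_ker_restrict]

theorem trace_eq_trace_restrict_ker_of_mul_eq_neg_mul [FiniteDimensional K V] [NeZero (2 : K)]
    {A B : Module.End K V} (hB : IsCompl (ker B) (range B)) (h : A * B = -(B * A)) :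
    trace K V A = trace K (ker B) (A.restrict (mapsTo_ker_of_mul_eq_neg_mul h)) := by
  let Br := B.restrict (p := range B) (q := range B) fun x _ => mem_range_self B x
  have hBr : IsUnit Br := by
    rw [isUnit_iff_ker_eq_bot, ker_restrict]
    exact disjoint_iff_comap_eq_bot.mp hB.disjoint.symm
  have hr : A.restrict (mapsTo_range_of_mul_eq_neg_mul h) * Br =
      -(Br * A.restrict (mapsTo_range_of_mul_eq_neg_mul h)) := by
    ext x
    exact congr($h x)
  rw [trace_eq_trace_restrict_add_trace_restrict hB _ (mapsTo_range_of_mul_eq_neg_mul h),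
    trace_eq_zero_of_mul_eq_neg_mul hBr hr, add_zero]

end Field

theorem IsSymmetric.isCompl_ker_range {𝕜 E : Type*} [RCLike 𝕜] [NormedAddCommGroup E]
    [InnerProductSpace 𝕜 E] [FiniteDimensional 𝕜 E] {T : E →ₗ[𝕜] E}
    (hT : T.IsSymmetric) :
    IsCompl (ker T) (range T) := by
  rw [← hT.orthogonal_range]
  exact (isCompl_orthogonal _).symm

end LinearMap

namespace GinspargWilson

section Ring

variable {R : Type*} [Ring R] {γ D : R}

theorem gamma_mul_add_mul_gamma (hGW : γ * D + D * γ = D * (γ * D)) :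
    γ * (γ * D) + γ * D * γ = γ * D * (γ * D) :=
  calc γ * (γ * D) + γ * D * γ = γ * (γ * D + D * γ) := by noncomm_ring
    _ = γ * D * (γ * D) := by rw [hGW]; noncomm_ring

theorem anticomm_gamma_mul {K : Type*} [Field K] [NeZero (2 : K)] [Algebra K R]
    (hGW : γ * D + D * γ = D * (γ * D)) :
    γ * (1 - (2⁻¹ : K) • D) * (γ * D) = -(γ * D * (γ * (1 - (2⁻¹ : K) • D))) := by
  refine eq_neg_of_add_eq_zero_left ?_
  calc γ * (1 - (2⁻¹ : K) • D) * (γ * D) + γ * D * (γ * (1 - (2⁻¹ : K) • D))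
      = (γ * (γ * D) + γ * D * γ) - (2⁻¹ + 2⁻¹ : K) • (γ * D * (γ * D)) := by
        simp only [mul_sub, sub_mul, mul_one, mul_smul_comm, smul_mul_assoc, add_smul, mul_assoc]
        abel
    _ = 0 := by
        rw [gamma_mul_add_mul_gamma hGW, ← two_mul, mul_inv_cancel₀ two_ne_zero, one_smul,
          sub_self]

end Ring

theorem isSymmetric_gamma_mul {𝕜 E : Type*} [RCLike 𝕜] [NormedAddCommGroup E]
    [InnerProductSpace 𝕜 E] [FiniteDimensional 𝕜 E] {γ D : E →ₗ[𝕜] E}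
    (hγsa : adjoint γ = γ) (hγ : γ * γ = 1) (hherm : adjoint D = γ * (D * γ)) :
    (γ * D).IsSymmetric := by
  rw [isSymmetric_iff_isSelfAdjoint, IsSelfAdjoint, star_eq_adjoint, Module.End.mul_eq_comp,
    adjoint_comp, hherm, hγsa, ← Module.End.mul_eq_comp]
  calc γ * (D * γ) * γ = γ * D * (γ * γ) := by noncomm_ring
    _ = γ * D := by rw [hγ, mul_one]

end GinspargWilson

/-- **Lattice index theorem.** Let `γ` be a self-adjoint involution on a
finite-dimensional complex inner product space and let `D` satisfy the
Ginsparg–Wilson relation `γ∘D + D∘γ = D∘γ∘D` together with γ-hermiticity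
`D† = γ∘D∘γ`.  With `n₊ = dim(ker D ∩ ker(γ − 1))` and
`n₋ = dim(ker D ∩ ker(γ + 1))`, one has `Tr(γ ∘ (1 − D/2)) = n₊ − n₋`. -/
theorem lattice_index_theorem
    {V : Type*} [NormedAddCommGroup V] [InnerProductSpace ℂ V] [FiniteDimensional ℂ V]
    (γ D : V →ₗ[ℂ] V)
    (hγsa : LinearMap.adjoint γ = γ) (hγ : γ ∘ₗ γ = 1)
    (hGW : γ ∘ₗ D + D ∘ₗ γ = D ∘ₗ γ ∘ₗ D)
    (hherm : LinearMap.adjoint D = γ ∘ₗ D ∘ₗ γ) :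
    LinearMap.trace ℂ V (γ ∘ₗ (1 - (2⁻¹ : ℂ) • D)) =
      (Module.finrank ℂ ↥(LinearMap.ker D ⊓ LinearMap.ker (γ - 1)) : ℂ)
        - (Module.finrank ℂ ↥(LinearMap.ker D ⊓ LinearMap.ker (γ + 1)) : ℂ) := by
  simp only [← Module.End.mul_eq_comp] at hγ hGW hherm ⊢
  have hkerB : ker (γ * D) = ker D := ker_comp_of_ker_eq_bot D (ker_eq_bot_of_inverse hγ)
  have hγker : ∀ x ∈ ker (γ * D), γ x ∈ ker (γ * D) := by
    intro x hx
    have hx' : γ (D x) = 0 := hx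
    have h := congr($(GinspargWilson.gamma_mul_add_mul_gamma hGW) x)
    simp only [LinearMap.add_apply, Module.End.mul_apply, hx', map_zero, zero_add] at h
    exact h
  have hanti := GinspargWilson.anticomm_gamma_mul (K := ℂ) hGW
  have hAγ : (γ * (1 - (2⁻¹ : ℂ) • D)).restrict (mapsTo_ker_of_mul_eq_neg_mul hanti) =
      γ.restrict hγker := by
    ext x
    have hx : γ (D x) = 0 := x.2
    simp [hx]
  have hcompl := (GinspargWilson.isSymmetric_gamma_mul hγsa hγ hherm).isCompl_ker_range
  rw [trace_eq_trace_restrict_ker_of_mul_eq_neg_mul hcompl hanti, hAγ,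
    trace_restrict_eq_finrank_sub_finrank_of_mul_self_eq_one hγ, hkerB]
end

section
/- Let d ≥ 1 and L ≥ 1 be integers and let δ ≥ 0 be a real number with L^d · δ < 1. Let 𝒜, 𝒜∞, q be real-valued periodic fields on Γ = (ℤ/Lℤ)^d and let k∞_1,…,k∞_d be real-valued periodic fields on Γ such that: (i) 𝒜∞(x) = q(x) + ∑_{μ=1}^{d} (k∞_μ(x) − k∞_μ(x − ê_μ)) for all x ∈ Γ; (ii) ∑_{x∈Γ} 𝒜(x) is an integer; (iii) ∑_{x∈Γ} q(x) is an integer; (iv) |𝒜(x) − 𝒜∞(x)| ≤ δ for all x ∈ Γ. Then there exist real-valued periodic fields k_1,…,k_d on Γ such that 𝒜(x) = q(x) + ∑_{μ=1}^{d} (k_μ(x) − k_μ(x − ê_μ)) for all x ∈ Γ, and |k_μ(x) − k∞_μ(x)| ≤ 2L·δ for all x ∈ Γ and all μ. -/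
namespace AnomalyAux

open Finset

variable {d L : ℕ} [NeZero L]

/-- `D ε j x` is the average of `ε` over the first `j` coordinates
(coordinates `ν` with `ν.val < j`), evaluated with the remaining coordinates
given by `x`. -/
noncomputable def D (ε : (Fin d → ZMod L) → ℝ) (j : ℕ) (x : Fin d → ZMod L) : ℝ :=
  (∑ y : Fin d → ZMod L, if ∀ ν : Fin d, j ≤ ν.val → y ν = x ν then ε y else 0) / (L : ℝ) ^ j

lemma natCast_val_self (a : ZMod L) : ((a.val : ℕ) : ZMod L) = a :=
  ZMod.natCast_rightInverse a

lemma D_zero (ε : (Fin d → ZMod L) → ℝ) (x : Fin d → ZMod L) : D ε 0 x = ε x := by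
  unfold D
  rw [Finset.sum_congr rfl fun y _ =>
    if_congr (show (∀ ν : Fin d, 0 ≤ ν.val → y ν = x ν) ↔ y = x by simp [funext_iff]) rfl rfl]
  simp

lemma D_top (ε : (Fin d → ZMod L) → ℝ) (x : Fin d → ZMod L) :
    D ε d x = (∑ y : Fin d → ZMod L, ε y) / (L : ℝ) ^ d := by
  unfold D
  congr 1
  refine Finset.sum_congr rfl fun y _ => ?_
  rw [if_pos]
  intro ν hν
  exact absurd ν.isLt (by omega)

lemma D_congr (ε : (Fin d → ZMod L) → ℝ) (j : ℕ) {x x' : Fin d → ZMod L}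
    (h : ∀ ν : Fin d, j ≤ ν.val → x ν = x' ν) : D ε j x = D ε j x' := by
  unfold D
  congr 1
  refine Finset.sum_congr rfl fun y _ => if_congr ?_ rfl rfl
  constructor <;> intro hy ν hν
  · rw [← h ν hν]; exact hy ν hν
  · rw [h ν hν]; exact hy ν hν

lemma D_line (ε : (Fin d → ZMod L) → ℝ) (μ : Fin d) (x : Fin d → ZMod L) :
    ∑ t : ZMod L, D ε μ.val (Function.update x μ t) = (L : ℝ) * D ε (μ.val + 1) x := by
  unfold D
  rw [← Finset.sum_div, Finset.sum_comm]
  have key : ∀ y : Fin d → ZMod L,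
      (∑ t : ZMod L,
        if ∀ ν : Fin d, μ.val ≤ ν.val → y ν = Function.update x μ t ν then ε y else 0)
      = if ∀ ν : Fin d, μ.val + 1 ≤ ν.val → y ν = x ν then ε y else 0 := by
    intro y
    have hcond : ∀ t : ZMod L,
        (∀ ν : Fin d, μ.val ≤ ν.val → y ν = Function.update x μ t ν) ↔
        (y μ = t ∧ ∀ ν : Fin d, μ.val + 1 ≤ ν.val → y ν = x ν) := by
      intro t
      constructor
      · intro h
        refine ⟨by simpa using h μ le_rfl, fun ν hν => ?_⟩
        have hne : ν ≠ μ := by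
          intro he; subst he; omega
        simpa [Function.update_of_ne hne] using h ν (by omega)
      · rintro ⟨h1, h2⟩ ν hν
        by_cases he : ν = μ
        · subst he; simpa using h1
        · have hv : μ.val + 1 ≤ ν.val := by
            have : ν.val ≠ μ.val := fun hc => he (Fin.ext hc)
            omega
          rw [Function.update_of_ne he]
          exact h2 ν hv
    rw [Finset.sum_congr rfl fun t _ => if_congr (hcond t) rfl rfl]
    simp only [ite_and]
    rw [Finset.sum_ite_eq (Finset.univ : Finset (ZMod L)) (y μ)]
    simp
  rw [Finset.sum_congr rfl fun y _ => key y]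
  have hL : (L : ℝ) ≠ 0 := Nat.cast_ne_zero.mpr (NeZero.ne L)
  rw [pow_succ]
  field_simp

lemma D_bound {ε : (Fin d → ZMod L) → ℝ} {c : ℝ} (hc : ∀ y, |ε y| ≤ c) :
    ∀ j, j ≤ d → ∀ x, |D ε j x| ≤ c := by
  intro j
  induction j with
  | zero => intro _ x; rw [D_zero]; exact hc x
  | succ n ih =>
    intro hn x
    have hnd : n < d := by omega
    have hL : (0 : ℝ) < L := by
      exact_mod_cast Nat.pos_of_ne_zero (NeZero.ne L)
    have hline := D_line ε ⟨n, hnd⟩ x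
    have heq : D ε (n + 1) x = (∑ t : ZMod L, D ε n (Function.update x ⟨n, hnd⟩ t)) / L := by
      rw [hline]
      field_simp
    rw [heq, abs_div, abs_of_pos hL, div_le_iff₀ hL]
    calc |∑ t : ZMod L, D ε n (Function.update x ⟨n, hnd⟩ t)|
        ≤ ∑ t : ZMod L, |D ε n (Function.update x ⟨n, hnd⟩ t)| :=
          Finset.abs_sum_le_sum_abs _ _
      _ ≤ ∑ _t : ZMod L, c := Finset.sum_le_sum fun t _ => ih (by omega) _
      _ = (L : ℝ) * c := by
          rw [Finset.sum_const, Finset.card_univ, ZMod.card, nsmul_eq_mul]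
      _ = c * L := mul_comm _ _

lemma val_neg_one' : (-1 : ZMod L).val = L - 1 := by
  have hL1 : 1 ≤ L := Nat.pos_of_ne_zero (NeZero.ne L)
  have h : (-1 : ZMod L) = ((L - 1 : ℕ) : ZMod L) := by
    have h0 : ((L : ℕ) : ZMod L) = 0 := ZMod.natCast_self L
    rw [Nat.cast_sub hL1, h0, Nat.cast_one, zero_sub]
  rw [h, ZMod.val_cast_of_lt (by omega)]

lemma val_sub_one {a : ZMod L} (ha : a ≠ 0) : (a - 1).val = a.val - 1 := by
  have h1 : 1 ≤ a.val := Nat.pos_of_ne_zero fun h => ha ((ZMod.val_eq_zero a).mp h)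
  have hlt := ZMod.val_lt a
  have h : a - 1 = ((a.val - 1 : ℕ) : ZMod L) := by
    rw [Nat.cast_sub h1, natCast_val_self, Nat.cast_one]
  rw [h, ZMod.val_cast_of_lt (by omega)]

lemma sum_range_cast (f : ZMod L → ℝ) :
    ∑ s ∈ Finset.range L, f ((s : ℕ) : ZMod L) = ∑ t : ZMod L, f t := by
  refine Finset.sum_nbij' (fun s => ((s : ℕ) : ZMod L)) (fun t => t.val) ?_ ?_ ?_ ?_ ?_
  · intro a _; exact Finset.mem_univ _
  · intro t _; exact Finset.mem_range.mpr (ZMod.val_lt t)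
  · intro a ha
    exact ZMod.val_cast_of_lt (Finset.mem_range.mp ha)
  · intro t _
    exact natCast_val_self t
  · intro a _; rfl

/-- The summand `D_j − D_{j+1}` associated to direction `μ` (with `j = μ.val`). -/
noncomputable def g (ε : (Fin d → ZMod L) → ℝ) (μ : Fin d) (x : Fin d → ZMod L) : ℝ :=
  D ε μ.val x - D ε (μ.val + 1) x

lemma D_succ_update (ε : (Fin d → ZMod L) → ℝ) (μ : Fin d) (x : Fin d → ZMod L) (t : ZMod L) :
    D ε (μ.val + 1) (Function.update x μ t) = D ε (μ.val + 1) x := by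
  apply D_congr
  intro ν hν
  have hne : ν ≠ μ := by
    intro he; subst he; omega
  rw [Function.update_of_ne hne]

lemma line_sum_zero (ε : (Fin d → ZMod L) → ℝ) (μ : Fin d) (x : Fin d → ZMod L) :
    ∑ t : ZMod L, g ε μ (Function.update x μ t) = 0 := by
  unfold g
  rw [Finset.sum_sub_distrib, D_line]
  rw [Finset.sum_congr rfl fun t _ => D_succ_update ε μ x t]
  rw [Finset.sum_const, Finset.card_univ, ZMod.card, nsmul_eq_mul]
  ring

/-- The current in direction `μ`: partial sums of `g` along the line in direction `μ`. -/
noncomputable def hcur (ε : (Fin d → ZMod L) → ℝ) (μ : Fin d) (x : Fin d → ZMod L) : ℝ :=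
  ∑ s ∈ Finset.range ((x μ).val + 1), g ε μ (Function.update x μ ((s : ℕ) : ZMod L))

lemma update_sub_unitVec (x : Fin d → ZMod L) (μ : Fin d) (t : ZMod L) :
    Function.update (x - unitVec d L μ) μ t = Function.update x μ t := by
  funext ν
  by_cases h : ν = μ
  · subst h; simp
  · simp [Function.update_of_ne h, unitVec, h, Pi.sub_apply]

lemma sub_unitVec_apply (x : Fin d → ZMod L) (μ : Fin d) :
    (x - unitVec d L μ) μ = x μ - 1 := by
  simp [unitVec, Pi.sub_apply]

lemma hcur_div (ε : (Fin d → ZMod L) → ℝ) (μ : Fin d) (x : Fin d → ZMod L) :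
    hcur ε μ x - hcur ε μ (x - unitVec d L μ) = g ε μ x := by
  by_cases h0 : x μ = 0
  · have hL1 : 1 ≤ L := Nat.pos_of_ne_zero (NeZero.ne L)
    have hxe : ((x - unitVec d L μ) μ).val = L - 1 := by
      rw [sub_unitVec_apply, h0, zero_sub, val_neg_one']
    have h2 : hcur ε μ (x - unitVec d L μ) = 0 := by
      unfold hcur
      rw [hxe, show L - 1 + 1 = L by omega]
      rw [Finset.sum_congr rfl fun s _ => by rw [update_sub_unitVec]]
      rw [sum_range_cast (fun t => g ε μ (Function.update x μ t))]
      exact line_sum_zero ε μ x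
    have h1 : hcur ε μ x = g ε μ x := by
      unfold hcur
      rw [h0, ZMod.val_zero, Finset.sum_range_one]
      rw [show ((0 : ℕ) : ZMod L) = x μ by rw [Nat.cast_zero, h0]]
      rw [Function.update_eq_self]
    rw [h1, h2, sub_zero]
  · have hv : 1 ≤ (x μ).val :=
      Nat.pos_of_ne_zero fun h => h0 ((ZMod.val_eq_zero (x μ)).mp h)
    have hxe : ((x - unitVec d L μ) μ).val = (x μ).val - 1 := by
      rw [sub_unitVec_apply]
      exact val_sub_one h0
    unfold hcur
    rw [hxe, Nat.sub_add_cancel hv]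
    have hrw : ∑ s ∈ Finset.range (x μ).val,
        g ε μ (Function.update (x - unitVec d L μ) μ ((s : ℕ) : ZMod L))
        = ∑ s ∈ Finset.range (x μ).val, g ε μ (Function.update x μ ((s : ℕ) : ZMod L)) :=
      Finset.sum_congr rfl fun s _ => by rw [update_sub_unitVec]
    rw [hrw, Finset.sum_range_succ]
    rw [show Function.update x μ (((x μ).val : ℕ) : ZMod L) = x by
      rw [natCast_val_self, Function.update_eq_self]]
    ring

lemma telescope (ε : (Fin d → ZMod L) → ℝ) (x : Fin d → ZMod L) :
    ∑ μ : Fin d, g ε μ x = ε x - (∑ y : Fin d → ZMod L, ε y) / (L : ℝ) ^ d := by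
  have h : ∑ μ : Fin d, g ε μ x = ∑ j ∈ Finset.range d, (D ε j x - D ε (j + 1) x) :=
    Fin.sum_univ_eq_sum_range (fun j => D ε j x - D ε (j + 1) x) d
  rw [h, Finset.sum_range_sub' (fun j => D ε j x), D_zero, D_top]

lemma hcur_bound {ε : (Fin d → ZMod L) → ℝ} {c : ℝ} (hc : ∀ y, |ε y| ≤ c)
    (μ : Fin d) (x : Fin d → ZMod L) : |hcur ε μ x| ≤ 2 * L * c := by
  have hc0 : 0 ≤ c := le_trans (abs_nonneg _) (hc x)
  have hg : ∀ y : Fin d → ZMod L, |g ε μ y| ≤ 2 * c := by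
    intro y
    have h1 := D_bound hc μ.val (le_of_lt μ.isLt) y
    have h2 := D_bound hc (μ.val + 1) μ.isLt y
    calc |g ε μ y| ≤ |D ε μ.val y| + |D ε (μ.val + 1) y| := abs_sub _ _
      _ ≤ 2 * c := by linarith
  have hvlt : (x μ).val < L := ZMod.val_lt (x μ)
  calc |hcur ε μ x|
      ≤ ∑ s ∈ Finset.range ((x μ).val + 1), |g ε μ (Function.update x μ ((s : ℕ) : ZMod L))| :=
        Finset.abs_sum_le_sum_abs _ _
    _ ≤ ∑ _s ∈ Finset.range ((x μ).val + 1), 2 * c :=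
        Finset.sum_le_sum fun s _ => hg _
    _ = ((x μ).val + 1 : ℕ) * (2 * c) := by
        rw [Finset.sum_const, Finset.card_range, nsmul_eq_mul]
    _ ≤ (L : ℝ) * (2 * c) := by
        have : ((x μ).val + 1 : ℕ) ≤ L := by omega
        have hcast : (((x μ).val + 1 : ℕ) : ℝ) ≤ (L : ℝ) := by exact_mod_cast this
        nlinarith
    _ = 2 * L * c := by ring

lemma exists_current (ε : (Fin d → ZMod L) → ℝ) (hsum : ∑ y : Fin d → ZMod L, ε y = 0)
    {c : ℝ} (hc : ∀ y, |ε y| ≤ c) :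
    ∃ h : Fin d → (Fin d → ZMod L) → ℝ,
      (∀ x : Fin d → ZMod L, ε x = ∑ μ : Fin d, (h μ x - h μ (x - unitVec d L μ))) ∧
      (∀ (μ : Fin d) (x : Fin d → ZMod L), |h μ x| ≤ 2 * L * c) := by
  refine ⟨fun μ => hcur ε μ, fun x => ?_, fun μ x => hcur_bound hc μ x⟩
  rw [Finset.sum_congr rfl fun μ _ => hcur_div ε μ x, telescope, hsum]
  simp

end AnomalyAux

/-- Abstract form of **Theorem 3.1**: if the finite-lattice anomaly `𝒜` and the
infinite-lattice anomaly `𝒜∞ = q + ∂*_μ k∞_μ` both have integer total lattice sum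
(for `𝒜` by the index theorem, for `q` by flux quantization) and differ pointwise
by at most `δ` with `L^d δ < 1`, then `𝒜 = q + ∂*_μ k_μ` for periodic currents
`k_μ` with `|k_μ(x) − k∞_μ(x)| ≤ 2 L δ`. -/
theorem anomaly_decomposition_finite_lattice
    (d L : ℕ) (hd : 1 ≤ d) (hL : 1 ≤ L) [NeZero L]
    (δ : ℝ) (hδ : 0 ≤ δ) (hδL : (L : ℝ) ^ d * δ < 1)
    (A Ainf q : (Fin d → ZMod L) → ℝ)
    (kinf : Fin d → (Fin d → ZMod L) → ℝ)
    (hAinf : ∀ x : Fin d → ZMod L,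
      Ainf x = q x + ∑ μ : Fin d, (kinf μ x - kinf μ (x - unitVec d L μ)))
    (hA_int : ∃ n : ℤ, ∑ x : Fin d → ZMod L, A x = (n : ℝ))
    (hq_int : ∃ n : ℤ, ∑ x : Fin d → ZMod L, q x = (n : ℝ))
    (hclose : ∀ x : Fin d → ZMod L, |A x - Ainf x| ≤ δ) :
    ∃ k : Fin d → (Fin d → ZMod L) → ℝ,
      (∀ x : Fin d → ZMod L,
        A x = q x + ∑ μ : Fin d, (k μ x - k μ (x - unitVec d L μ))) ∧
      (∀ (μ : Fin d) (x : Fin d → ZMod L), |k μ x - kinf μ x| ≤ 2 * L * δ) := by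
  obtain ⟨n, hn⟩ := hA_int
  obtain ⟨m, hm⟩ := hq_int
  -- total sum of the divergence of kinf vanishes
  have hsumAinf : ∑ x : Fin d → ZMod L, Ainf x = ∑ x : Fin d → ZMod L, q x := by
    rw [Finset.sum_congr rfl fun x _ => hAinf x, Finset.sum_add_distrib]
    have hdiv : ∑ x : Fin d → ZMod L, ∑ μ : Fin d,
        (kinf μ x - kinf μ (x - unitVec d L μ)) = 0 := by
      rw [Finset.sum_comm]
      refine Finset.sum_eq_zero fun μ _ => ?_
      rw [Finset.sum_sub_distrib]
      have hshift : ∑ x : Fin d → ZMod L, kinf μ (x - unitVec d L μ)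
          = ∑ x : Fin d → ZMod L, kinf μ x :=
        Fintype.sum_equiv (Equiv.subRight (unitVec d L μ)) _ _ (fun x => rfl)
      rw [hshift]
      ring
    rw [hdiv, add_zero]
  have hcard : Fintype.card (Fin d → ZMod L) = L ^ d := by
    rw [Fintype.card_fun, ZMod.card, Fintype.card_fin]
  -- the error field ε has zero total sum
  set ε : (Fin d → ZMod L) → ℝ := fun x => A x - Ainf x with hεdef
  have hεclose : ∀ x, |ε x| ≤ δ := fun x => hclose x
  have hsumε : ∑ x : Fin d → ZMod L, ε x = 0 := by
    have h1 : ∑ x : Fin d → ZMod L, ε x = ((n - m : ℤ) : ℝ) := by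
      simp only [hεdef]
      rw [Finset.sum_sub_distrib, hn, hsumAinf, hm]
      push_cast
      ring
    have h2 : |∑ x : Fin d → ZMod L, ε x| ≤ (L : ℝ) ^ d * δ := by
      calc |∑ x : Fin d → ZMod L, ε x| ≤ ∑ x : Fin d → ZMod L, |ε x| :=
            Finset.abs_sum_le_sum_abs _ _
        _ ≤ ∑ _x : Fin d → ZMod L, δ := Finset.sum_le_sum fun x _ => hεclose x
        _ = (L : ℝ) ^ d * δ := by
            rw [Finset.sum_const, Finset.card_univ, hcard, nsmul_eq_mul]
            push_cast
            ring
    have h3 : |((n - m : ℤ) : ℝ)| < 1 := h1 ▸ lt_of_le_of_lt h2 hδL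
    have h4 : |(n - m : ℤ)| < 1 := by exact_mod_cast h3
    have h5 : (n - m : ℤ) = 0 := by
      rcases abs_lt.mp h4 with ⟨ha, hb⟩
      omega
    rw [h1, h5]
    simp
  obtain ⟨h, hdecomp, hbound⟩ := AnomalyAux.exists_current ε hsumε hεclose
  refine ⟨fun μ x => kinf μ x + h μ x, fun x => ?_, fun μ x => ?_⟩
  · have hA : A x = Ainf x + ε x := by simp [hεdef]
    rw [hA, hAinf x, hdecomp x, add_assoc, ← Finset.sum_add_distrib]
    congr 1
    refine Finset.sum_congr rfl fun μ _ => ?_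
    ring
  · simpa using hbound μ x
end
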